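/- Decomposition φ = dx₁ ∧ ω + Re Υ and *φ = ½ω² − dx₁ ∧ Im Υ under the splitting ℝ⁷ = ℝ × ℂ³: let ι : ℂ³ → ℝ⁷ be the real-linear isometric inclusion sending (z₁, z₂, z₃) to the vector with first coordinate 0 and with coordinates x_{2j} + i·x_{2j+1} = z_j for j = 1, 2, 3, and let e₁ be the first standard basis vector of ℝ⁷. Then for all u, v, w, u₁, u₂, u₃, u₄ ∈ ℂ³: (i) φ(e₁, ι(u), ι(v)) = ω(u, v); (ii) φ(ι(u), ι(v), ι(w)) = Re Υ(u, v, w); (iii) *φ(e₁, ι(u), ι(v), ι(w)) = −Im Υ(u, v, w); and (iv) *φ(ι(u₁), ι(u₂), ι(u₃), ι(u₄)) = ω(u₁,u₂)ω(u₃,u₄) − ω(u₁,u₃)ω(u₂,u₄) + ω(u₁,u₄)ω(u₂,u₃). -/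
import Mathlib

noncomputable section

open Complex Finset

/-- The real inner product on `ℂ³`: `⟪u,v⟫ = Re Σⱼ uⱼ · conj(vⱼ)`. -/
def rinner (u v : EuclideanSpace ℂ (Fin 3)) : ℝ :=
  (∑ j, u j * starRingEnd ℂ (v j)).re

/-- The standard Kähler 2-form on `ℂ³`: `ω(u,v) = ⟪i•u, v⟫`. -/
def kahlerForm (u v : EuclideanSpace ℂ (Fin 3)) : ℝ :=
  rinner (Complex.I • u) v

/-- The holomorphic volume form on `ℂ³`: `Υ(u,v,w) = det` of the complex matrix
with columns `u, v, w`. -/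
def Upsilon (u v w : EuclideanSpace ℂ (Fin 3)) : ℂ :=
  Matrix.det !![u 0, v 0, w 0; u 1, v 1, w 1; u 2, v 2, w 2]

/-- The alternating 3-form `dx_{ijk}` on `ℝ⁷` (with 0-indexed coordinates). -/
def dx3 (i j k : Fin 7) (u v w : EuclideanSpace ℝ (Fin 7)) : ℝ :=
  Matrix.det !![u i, v i, w i; u j, v j, w j; u k, v k, w k]

/-- The alternating 4-form `dx_{ijkl}` on `ℝ⁷` (with 0-indexed coordinates). -/
def dx4 (i j k l : Fin 7) (u₁ u₂ u₃ u₄ : EuclideanSpace ℝ (Fin 7)) : ℝ :=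
  Matrix.det !![u₁ i, u₂ i, u₃ i, u₄ i; u₁ j, u₂ j, u₃ j, u₄ j;
                u₁ k, u₂ k, u₃ k, u₄ k; u₁ l, u₂ l, u₃ l, u₄ l]

/-- The standard G₂ 3-form `φ` on `ℝ⁷` (1-indexed:
`dx₁₂₃ + dx₁₄₅ + dx₁₆₇ + dx₂₄₆ − dx₂₅₇ − dx₃₄₇ − dx₃₅₆`). -/
def g2Form (u v w : EuclideanSpace ℝ (Fin 7)) : ℝ :=
  dx3 0 1 2 u v w + dx3 0 3 4 u v w + dx3 0 5 6 u v w + dx3 1 3 5 u v w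
    - dx3 1 4 6 u v w - dx3 2 3 6 u v w - dx3 2 4 5 u v w

/-- The Hodge dual `*φ` on `ℝ⁷` (1-indexed:
`dx₄₅₆₇ + dx₂₃₆₇ + dx₂₃₄₅ + dx₁₃₅₇ − dx₁₃₄₆ − dx₁₂₅₆ − dx₁₂₄₇`). -/
def g2FormDual (u₁ u₂ u₃ u₄ : EuclideanSpace ℝ (Fin 7)) : ℝ :=
  dx4 3 4 5 6 u₁ u₂ u₃ u₄ + dx4 1 2 5 6 u₁ u₂ u₃ u₄ + dx4 1 2 3 4 u₁ u₂ u₃ u₄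
    + dx4 0 2 4 6 u₁ u₂ u₃ u₄ - dx4 0 2 3 5 u₁ u₂ u₃ u₄ - dx4 0 1 4 5 u₁ u₂ u₃ u₄
    - dx4 0 1 3 6 u₁ u₂ u₃ u₄

/-- The real-linear isometric inclusion `ι : ℂ³ → ℝ⁷`, sending `(z₁,z₂,z₃)` to the
vector with first coordinate `0` and `x_{2j} + i·x_{2j+1} = z_j`. -/
def inclC3 (z : EuclideanSpace ℂ (Fin 3)) : EuclideanSpace ℝ (Fin 7) :=
  (WithLp.equiv 2 (Fin 7 → ℝ)).symm
    ![0, (z 0).re, (z 0).im, (z 1).re, (z 1).im, (z 2).re, (z 2).im]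

lemma det_fin_four' (M : Matrix (Fin 4) (Fin 4) ℝ) :
    M.det =
      M 0 0 * (M 1 1 * (M 2 2 * M 3 3 - M 2 3 * M 3 2)
             - M 1 2 * (M 2 1 * M 3 3 - M 2 3 * M 3 1)
             + M 1 3 * (M 2 1 * M 3 2 - M 2 2 * M 3 1))
    - M 0 1 * (M 1 0 * (M 2 2 * M 3 3 - M 2 3 * M 3 2)
             - M 1 2 * (M 2 0 * M 3 3 - M 2 3 * M 3 0)
             + M 1 3 * (M 2 0 * M 3 2 - M 2 2 * M 3 0))
    + M 0 2 * (M 1 0 * (M 2 1 * M 3 3 - M 2 3 * M 3 1)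
             - M 1 1 * (M 2 0 * M 3 3 - M 2 3 * M 3 0)
             + M 1 3 * (M 2 0 * M 3 1 - M 2 1 * M 3 0))
    - M 0 3 * (M 1 0 * (M 2 1 * M 3 2 - M 2 2 * M 3 1)
             - M 1 1 * (M 2 0 * M 3 2 - M 2 2 * M 3 0)
             + M 1 2 * (M 2 0 * M 3 1 - M 2 1 * M 3 0)) := by
  rw [Matrix.det_succ_row_zero]
  simp [Fin.sum_univ_succ, Matrix.det_fin_three, Matrix.submatrix, Fin.succAbove,
    show (Fin.succ 2 : Fin 4) = 3 from rfl, show (Fin.castSucc 2 : Fin 4) = 2 from rfl,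
    show ((1 : Fin 4) < 3) = True from by decide]
  ring

lemma incl0 (z : EuclideanSpace ℂ (Fin 3)) : inclC3 z 0 = 0 := rfl
lemma incl1 (z : EuclideanSpace ℂ (Fin 3)) : inclC3 z 1 = (z 0).re := rfl
lemma incl2 (z : EuclideanSpace ℂ (Fin 3)) : inclC3 z 2 = (z 0).im := rfl
lemma incl3 (z : EuclideanSpace ℂ (Fin 3)) : inclC3 z 3 = (z 1).re := rfl
lemma incl4 (z : EuclideanSpace ℂ (Fin 3)) : inclC3 z 4 = (z 1).im := rfl
lemma incl5 (z : EuclideanSpace ℂ (Fin 3)) : inclC3 z 5 = (z 2).re := rfl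
lemma incl6 (z : EuclideanSpace ℂ (Fin 3)) : inclC3 z 6 = (z 2).im := rfl
lemma sing0 : EuclideanSpace.single (0 : Fin 7) (1:ℝ) 0 = 1 := by
  simp [EuclideanSpace.single_apply]
lemma sing (i : Fin 7) (h : i ≠ 0) : EuclideanSpace.single (0 : Fin 7) (1:ℝ) i = 0 := by
  simp [EuclideanSpace.single_apply, h]


set_option maxHeartbeats 4000000 in
lemma part1 : ∀ u v : EuclideanSpace ℂ (Fin 3),
      g2Form (EuclideanSpace.single (0 : Fin 7) 1) (inclC3 u) (inclC3 v) =
        kahlerForm u v := by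
  intros
  simp only [g2Form, g2FormDual, dx3, dx4, kahlerForm, rinner, Upsilon,
      incl0, incl1, incl2, incl3, incl4, incl5, incl6, sing0,
      sing 1 (by decide), sing 2 (by decide), sing 3 (by decide), sing 4 (by decide),
      sing 5 (by decide), sing 6 (by decide),
      Matrix.det_fin_three, det_fin_four',
      Matrix.cons_val', Matrix.of_apply, Matrix.cons_val_zero, Matrix.cons_val_one, Matrix.head_cons,
      Matrix.empty_val', Matrix.cons_val_fin_one, Matrix.head_fin_const,
      Matrix.cons_val_two, Matrix.cons_val_three, Matrix.tail_cons,
      Fin.sum_univ_three, Fin.isValue,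
      Complex.add_re, Complex.add_im, Complex.mul_re, Complex.mul_im,
      Complex.sub_re, Complex.sub_im, Complex.I_re, Complex.I_im,
      Complex.smul_re, Complex.smul_im, Complex.conj_re, Complex.conj_im,
      PiLp.smul_apply, smul_eq_mul]
  ring

set_option maxHeartbeats 4000000 in
lemma part2 : ∀ u v w : EuclideanSpace ℂ (Fin 3),
      g2Form (inclC3 u) (inclC3 v) (inclC3 w) = (Upsilon u v w).re := by
  intros
  simp only [g2Form, g2FormDual, dx3, dx4, kahlerForm, rinner, Upsilon,
      incl0, incl1, incl2, incl3, incl4, incl5, incl6, sing0,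
      sing 1 (by decide), sing 2 (by decide), sing 3 (by decide), sing 4 (by decide),
      sing 5 (by decide), sing 6 (by decide),
      Matrix.det_fin_three, det_fin_four',
      Matrix.cons_val', Matrix.of_apply, Matrix.cons_val_zero, Matrix.cons_val_one, Matrix.head_cons,
      Matrix.empty_val', Matrix.cons_val_fin_one, Matrix.head_fin_const,
      Matrix.cons_val_two, Matrix.cons_val_three, Matrix.tail_cons,
      Fin.sum_univ_three, Fin.isValue,
      Complex.add_re, Complex.add_im, Complex.mul_re, Complex.mul_im,
      Complex.sub_re, Complex.sub_im, Complex.I_re, Complex.I_im,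
      Complex.smul_re, Complex.smul_im, Complex.conj_re, Complex.conj_im,
      PiLp.smul_apply, smul_eq_mul]
  ring

set_option maxHeartbeats 4000000 in
lemma part3 : ∀ u v w : EuclideanSpace ℂ (Fin 3),
      g2FormDual (EuclideanSpace.single (0 : Fin 7) 1) (inclC3 u) (inclC3 v)
        (inclC3 w) = -(Upsilon u v w).im := by
  intros
  simp only [g2Form, g2FormDual, dx3, dx4, kahlerForm, rinner, Upsilon,
      incl0, incl1, incl2, incl3, incl4, incl5, incl6, sing0,
      sing 1 (by decide), sing 2 (by decide), sing 3 (by decide), sing 4 (by decide),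
      sing 5 (by decide), sing 6 (by decide),
      Matrix.det_fin_three, det_fin_four',
      Matrix.cons_val', Matrix.of_apply, Matrix.cons_val_zero, Matrix.cons_val_one, Matrix.head_cons,
      Matrix.empty_val', Matrix.cons_val_fin_one, Matrix.head_fin_const,
      Matrix.cons_val_two, Matrix.cons_val_three, Matrix.tail_cons,
      Fin.sum_univ_three, Fin.isValue,
      Complex.add_re, Complex.add_im, Complex.mul_re, Complex.mul_im,
      Complex.sub_re, Complex.sub_im, Complex.I_re, Complex.I_im,
      Complex.smul_re, Complex.smul_im, Complex.conj_re, Complex.conj_im,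
      PiLp.smul_apply, smul_eq_mul]
  ring

set_option maxHeartbeats 4000000 in
lemma part4 : ∀ u₁ u₂ u₃ u₄ : EuclideanSpace ℂ (Fin 3),
      g2FormDual (inclC3 u₁) (inclC3 u₂) (inclC3 u₃) (inclC3 u₄) =
        kahlerForm u₁ u₂ * kahlerForm u₃ u₄ - kahlerForm u₁ u₃ * kahlerForm u₂ u₄
          + kahlerForm u₁ u₄ * kahlerForm u₂ u₃ := by
  intros
  simp only [g2Form, g2FormDual, dx3, dx4, kahlerForm, rinner, Upsilon,
      incl0, incl1, incl2, incl3, incl4, incl5, incl6, sing0,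
      sing 1 (by decide), sing 2 (by decide), sing 3 (by decide), sing 4 (by decide),
      sing 5 (by decide), sing 6 (by decide),
      Matrix.det_fin_three, det_fin_four',
      Matrix.cons_val', Matrix.of_apply, Matrix.cons_val_zero, Matrix.cons_val_one, Matrix.head_cons,
      Matrix.empty_val', Matrix.cons_val_fin_one, Matrix.head_fin_const,
      Matrix.cons_val_two, Matrix.cons_val_three, Matrix.tail_cons,
      Fin.sum_univ_three, Fin.isValue,
      Complex.add_re, Complex.add_im, Complex.mul_re, Complex.mul_im,
      Complex.sub_re, Complex.sub_im, Complex.I_re, Complex.I_im,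
      Complex.smul_re, Complex.smul_im, Complex.conj_re, Complex.conj_im,
      PiLp.smul_apply, smul_eq_mul]
  ring

/-- **Decomposition `φ = dx₁ ∧ ω + Re Υ` and `*φ = ½ω² − dx₁ ∧ Im Υ`** under the
splitting `ℝ⁷ = ℝ × ℂ³`. -/
theorem g2Form_decomposition :
    (∀ u v : EuclideanSpace ℂ (Fin 3),
      g2Form (EuclideanSpace.single (0 : Fin 7) 1) (inclC3 u) (inclC3 v) =
        kahlerForm u v) ∧
    (∀ u v w : EuclideanSpace ℂ (Fin 3),
      g2Form (inclC3 u) (inclC3 v) (inclC3 w) = (Upsilon u v w).re) ∧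
    (∀ u v w : EuclideanSpace ℂ (Fin 3),
      g2FormDual (EuclideanSpace.single (0 : Fin 7) 1) (inclC3 u) (inclC3 v)
        (inclC3 w) = -(Upsilon u v w).im) ∧
    (∀ u₁ u₂ u₃ u₄ : EuclideanSpace ℂ (Fin 3),
      g2FormDual (inclC3 u₁) (inclC3 u₂) (inclC3 u₃) (inclC3 u₄) =
        kahlerForm u₁ u₂ * kahlerForm u₃ u₄ - kahlerForm u₁ u₃ * kahlerForm u₂ u₄
          + kahlerForm u₁ u₄ * kahlerForm u₂ u₃) :=
  ⟨part1, part2, part3, part4⟩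

end
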